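/- arXiv:2601.19706 — 8 statements merged into one kernel-verified Lean document; each statement's English description precedes it below -/
import Mathlib

section
/- Under Approval Voting with committee size k, if election E' is obtained from election E by adding a single approval (for a candidate c in a vote v that did not previously approve c), then for every AV-winning committee W of E there exists an AV-winning committee W' of E' with |W ∩ W'| ≥ k − 1. -/
open Finset

/-- Approval score of candidate `c` under approval profile `A`. -/
def appScore {V C : Type*} [Fintype V] [DecidableEq C]
    (A : V → Finset C) (c : C) : ℕ :=
  (Finset.univ.filter (fun v => c ∈ A v)).card

/-- AV score of a committee. -/
def avScore {V C : Type*} [Fintype V] [DecidableEq C]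
    (A : V → Finset C) (S : Finset C) : ℕ :=
  ∑ c ∈ S, appScore A c

lemma appScore_update {V C : Type*} [Fintype V] [DecidableEq V] [DecidableEq C]
    (A : V → Finset C) (v : V) (c : C) (hc : c ∉ A v) (d : C) :
    appScore (Function.update A v (insert c (A v))) d
      = appScore A d + (if d = c then 1 else 0) := by
  unfold appScore
  by_cases hdc : d = c
  · subst hdc
    have : (Finset.univ.filter (fun v' => d ∈ Function.update A v (insert d (A v)) v'))
        = insert v (Finset.univ.filter (fun v' => d ∈ A v')) := by
      ext v'
      by_cases hv : v' = v <;> simp [Function.update, hv, hc]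
    rw [this, Finset.card_insert_of_notMem (by simp [hc])]
    simp
  · have : (Finset.univ.filter (fun v' => d ∈ Function.update A v (insert c (A v)) v'))
        = Finset.univ.filter (fun v' => d ∈ A v') := by
      ext v'
      by_cases hv : v' = v <;> simp [Function.update, hv, hdc]
    rw [this]; simp [hdc]

lemma avScore_update {V C : Type*} [Fintype V] [DecidableEq V] [DecidableEq C]
    (A : V → Finset C) (v : V) (c : C) (hc : c ∉ A v) (S : Finset C) :
    avScore (Function.update A v (insert c (A v))) S
      = avScore A S + (if c ∈ S then 1 else 0) := by
  unfold avScore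
  rw [Finset.sum_congr rfl (fun d _ => appScore_update A v c hc d),
    Finset.sum_add_distrib, Finset.sum_ite_eq' S c (fun _ => 1)]

/-- AV is 1-Add-robust. -/
theorem av_add_robustness_level_one
    {V C : Type*} [Fintype V] [Fintype C] [DecidableEq V] [DecidableEq C]
    (A : V → Finset C) (k : ℕ) (v : V) (c : C) (hc : c ∉ A v)
    (A' : V → Finset C) (hA' : A' = Function.update A v (insert c (A v)))
    (W : Finset C) (hWcard : W.card = k)
    (hWwin : ∀ S : Finset C, S.card = k → avScore A S ≤ avScore A W) :
    ∃ W' : Finset C, W'.card = k ∧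
      (∀ S : Finset C, S.card = k → avScore A' S ≤ avScore A' W') ∧
      k - 1 ≤ (W ∩ W').card := by
  subst hA'
  have hav := avScore_update A v c hc
  by_cases hcW : c ∈ W
  · refine ⟨W, hWcard, ?_, ?_⟩
    · intro S hS
      rw [hav S, hav W]
      have := hWwin S hS
      split_ifs <;> omega
    · simp [hWcard]
  · by_cases hwin : ∀ S : Finset C, S.card = k →
        avScore (Function.update A v (insert c (A v))) S
          ≤ avScore (Function.update A v (insert c (A v))) W
    · exact ⟨W, hWcard, hwin, by simp [hWcard]⟩
    · push_neg at hwin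
      obtain ⟨S₀, hS₀card, hS₀⟩ := hwin
      rw [hav S₀, hav W] at hS₀
      simp only [hcW, if_false, add_zero] at hS₀
      have hle := hWwin S₀ hS₀card
      have hcS₀ : c ∈ S₀ := by
        by_contra h; simp [h] at hS₀; omega
      have hSeq : avScore A S₀ = avScore A W := by
        simp [hcS₀] at hS₀; omega
      have hk1 : 1 ≤ k := by
        rw [← hS₀card]; exact Finset.card_pos.mpr ⟨c, hcS₀⟩
      have hWne : W.Nonempty := Finset.card_pos.mp (by omega)
      obtain ⟨m, hmW, hmmin⟩ := Finset.exists_min_image W (appScore A) hWne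
      -- appScore A m ≤ appScore A c
      have happ : appScore A m ≤ appScore A c := by
        by_contra h
        push_neg at h
        have hns : ¬ W ⊆ S₀ := by
          intro hsub
          have : W = S₀ := Finset.eq_of_subset_of_card_le hsub (by omega)
          exact hcW (this ▸ hcS₀)
        obtain ⟨w, hwW, hwS₀⟩ := Finset.not_subset.mp hns
        set T := insert w (S₀.erase c) with hT
        have hwe : w ∉ S₀.erase c := fun hw => hwS₀ (Finset.mem_of_mem_erase hw)
        have hTcard : T.card = k := by
          rw [hT, Finset.card_insert_of_notMem hwe, Finset.card_erase_of_mem hcS₀]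
          omega
        have hTscore : avScore A T = appScore A w + avScore A (S₀.erase c) := by
          rw [hT]; unfold avScore; rw [Finset.sum_insert hwe]
        have hS₀score : avScore A S₀ = appScore A c + avScore A (S₀.erase c) := by
          unfold avScore; rw [Finset.add_sum_erase _ _ hcS₀]
        have := hWwin T hTcard
        have hwm : appScore A m ≤ appScore A w := hmmin w hwW
        omega
      refine ⟨insert c (W.erase m), ?_, ?_, ?_⟩
      · rw [Finset.card_insert_of_notMem (fun h => hcW (Finset.mem_of_mem_erase h)),
          Finset.card_erase_of_mem hmW]
        omega
      · intro S hS
        rw [hav S, hav (insert c (W.erase m))]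
        have hcm : c ∉ W.erase m := fun h => hcW (Finset.mem_of_mem_erase h)
        have h1 : avScore A (insert c (W.erase m))
            = appScore A c + avScore A (W.erase m) := by
          unfold avScore; rw [Finset.sum_insert hcm]
        have h2 : avScore A W = appScore A m + avScore A (W.erase m) := by
          unfold avScore; rw [Finset.add_sum_erase _ _ hmW]
        have h3 := hWwin S hS
        simp only [Finset.mem_insert, true_or, if_pos, eq_self_iff_true]
        split_ifs <;> omega
      · have hsub : W.erase m ⊆ W ∩ insert c (W.erase m) := by
          intro x hx
          exact Finset.mem_inter.mpr ⟨Finset.mem_of_mem_erase hx,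
            Finset.mem_insert_of_mem hx⟩
        calc k - 1 = (W.erase m).card := by
              rw [Finset.card_erase_of_mem hmW, hWcard]
          _ ≤ _ := Finset.card_le_card hsub
end

section
/- Under Approval Voting with committee size k, if election E' is obtained from election E by removing a single approval (deleting a candidate c from the approval set of a voter v that approved c), then for every AV-winning committee W of E there exists an AV-winning committee W' of E' with |W ∩ W'| ≥ k − 1. -/
open Finset

/-- Swap lemma: if T is a max-score committee, y ∈ T, x ∉ T, then score x ≤ score y. -/
lemma swap_le {V C : Type*} [Fintype V] [DecidableEq C]
    (A : V → Finset C) (k : ℕ) (T : Finset C) (hT : T.card = k)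
    (hopt : ∀ S : Finset C, S.card = k → avScore A S ≤ avScore A T)
    {x y : C} (hy : y ∈ T) (hx : x ∉ T) :
    appScore A x ≤ appScore A y := by
  have hxy : x ≠ y := fun h => hx (h ▸ hy)
  have hxe : x ∉ T.erase y := fun h => hx (mem_of_mem_erase h)
  have hk : 1 ≤ k := hT ▸ card_pos.mpr ⟨y, hy⟩
  have hcard : (insert x (T.erase y)).card = k := by
    rw [card_insert_of_notMem hxe, card_erase_of_mem hy, hT]
    omega
  have h1 := hopt _ hcard
  have h2 : avScore A (insert x (T.erase y)) = appScore A x + avScore A (T.erase y) := by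
    rw [avScore, sum_insert hxe]; rfl
  have h3 : avScore A T = appScore A y + avScore A (T.erase y) :=
    (Finset.add_sum_erase T (appScore A) hy).symm
  omega

/-- AV is 1-Remove-robust. -/
theorem av_remove_robustness_level_one
    {V C : Type*} [Fintype V] [Fintype C] [DecidableEq V] [DecidableEq C]
    (A : V → Finset C) (k : ℕ) (v : V) (c : C) (hc : c ∈ A v)
    (A' : V → Finset C) (hA' : A' = Function.update A v ((A v).erase c))
    (W : Finset C) (hWcard : W.card = k)
    (hWwin : ∀ S : Finset C, S.card = k → avScore A S ≤ avScore A W) :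
    ∃ W' : Finset C, W'.card = k ∧
      (∀ S : Finset C, S.card = k → avScore A' S ≤ avScore A' W') ∧
      k - 1 ≤ (W ∩ W').card := by
  -- basic score facts
  have happ_ne : ∀ x : C, x ≠ c → appScore A' x = appScore A x := by
    intro x hx
    unfold appScore
    congr 1
    apply filter_congr
    intro u _
    subst hA'
    rcases eq_or_ne u v with rfl | huv
    · simp [Function.update_self, mem_erase, hx]
    · simp [Function.update_of_ne huv]
  have happ_c : appScore A' c + 1 = appScore A c := by
    unfold appScore
    have hset : (Finset.univ.filter (fun u => c ∈ A' u))
        = (Finset.univ.filter (fun u => c ∈ A u)).erase v := by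
      ext u
      subst hA'
      rcases eq_or_ne u v with rfl | huv
      · simp [Function.update_self]
      · simp [Function.update_of_ne huv, huv]
    rw [hset, card_erase_add_one]
    simp [hc]
  have hsum_ne : ∀ S : Finset C, c ∉ S → avScore A' S = avScore A S := by
    intro S hS
    apply sum_congr rfl
    intro x hx
    exact happ_ne x (fun h => hS (h ▸ hx))
  have hsum_mem : ∀ S : Finset C, c ∈ S → avScore A' S + 1 = avScore A S := by
    intro S hS
    have h1 : avScore A' S = appScore A' c + avScore A' (S.erase c) :=
      (Finset.add_sum_erase S (appScore A') hS).symm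
    have h2 : avScore A S = appScore A c + avScore A (S.erase c) :=
      (Finset.add_sum_erase S (appScore A) hS).symm
    have h3 : avScore A' (S.erase c) = avScore A (S.erase c) :=
      hsum_ne _ (notMem_erase c S)
    omega
  have hle : ∀ S : Finset C, avScore A' S ≤ avScore A S := by
    intro S
    by_cases h : c ∈ S
    · have := hsum_mem S h; omega
    · rw [hsum_ne S h]
  by_cases hWstill : ∀ S : Finset C, S.card = k → avScore A' S ≤ avScore A' W
  · exact ⟨W, hWcard, hWstill, by rw [inter_self, hWcard]; omega⟩
  · push_neg at hWstill
    obtain ⟨S, hScard, hlt⟩ := hWstill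
    have hcW : c ∈ W := by
      by_contra hcW
      have := hsum_ne W hcW
      have := hle S
      have := hWwin S hScard
      omega
    have hW1 := hsum_mem W hcW
    -- avScore A' S ≤ avScore A S ≤ avScore A W = avScore A' W + 1 ≤ avScore A' S
    have hSA := hWwin S hScard
    have hSle := hle S
    have hcS : c ∉ S := by
      by_contra h
      have := hsum_mem S h
      omega
    have hSeq : avScore A S = avScore A W := by
      have := hsum_ne S hcS
      omega
    have hSopt : ∀ T : Finset C, T.card = k → avScore A T ≤ avScore A S := by
      intro T hT; rw [hSeq]; exact hWwin T hT
    -- pick d ∈ S \ W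
    have hSW : ¬ S ⊆ W := by
      intro hsub
      have : S = W := eq_of_subset_of_card_le hsub (by omega)
      exact hcS (this ▸ hcW)
    obtain ⟨d, hdS, hdW⟩ := not_subset.mp hSW
    have hdc : d ≠ c := fun h => hcS (h ▸ hdS)
    have hscore : appScore A c ≤ appScore A d :=
      swap_le A k S hScard hSopt hdS (by simpa [hSeq] using hcS)
    -- build W'
    have hdWe : d ∉ W.erase c := fun h => hdW (mem_of_mem_erase h)
    refine ⟨insert d (W.erase c), ?_, ?_, ?_⟩
    · rw [card_insert_of_notMem hdWe, card_erase_of_mem hcW, hWcard]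
      have : 1 ≤ k := hWcard ▸ card_pos.mpr ⟨c, hcW⟩
      omega
    · intro T hT
      have hcW' : c ∉ insert d (W.erase c) := by
        simp [hdc.symm, notMem_erase]
      rw [hsum_ne _ hcW']
      have h2 : avScore A (insert d (W.erase c)) = appScore A d + avScore A (W.erase c) := by
        rw [avScore, sum_insert hdWe]; rfl
      have h3 : avScore A W = appScore A c + avScore A (W.erase c) :=
        (Finset.add_sum_erase W (appScore A) hcW).symm
      have h4 := hle T
      have h5 := hWwin T hT
      omega
    · have hsub : W.erase c ⊆ W ∩ insert d (W.erase c) := by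
        intro x hx
        exact mem_inter.mpr ⟨mem_of_mem_erase hx, mem_insert_of_mem hx⟩
      have := card_le_card hsub
      rw [card_erase_of_mem hcW, hWcard] at this
      omega
end

section
/- Under Approval Voting with committee size k, if election E' is obtained from E by swapping a single approval in one vote (removing an approval for candidate c and adding one for candidate d ≠ c in the same vote), then for every AV-winning committee W of E there exists an AV-winning committee W' of E' with |W ∩ W'| ≥ k − 1. -/
open Finset

/-- AV is 1-Swap-robust. -/
theorem av_swap_robustness_level_one
    {V C : Type*} [Fintype V] [Fintype C] [DecidableEq V] [DecidableEq C]
    (A : V → Finset C) (k : ℕ) (v : V) (c d : C)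
    (hc : c ∈ A v) (hd : d ∉ A v) (hcd : d ≠ c)
    (A' : V → Finset C) (hA' : A' = Function.update A v (insert d ((A v).erase c)))
    (W : Finset C) (hWcard : W.card = k)
    (hWwin : ∀ S : Finset C, S.card = k → avScore A S ≤ avScore A W) :
    ∃ W' : Finset C, W'.card = k ∧
      (∀ S : Finset C, S.card = k → avScore A' S ≤ avScore A' W') ∧
      k - 1 ≤ (W ∩ W').card := by
  have hAv : A' v = insert d ((A v).erase c) := by rw [hA']; simp
  have hAw : ∀ w, w ≠ v → A' w = A w := by
    intro w hw; rw [hA']; exact Function.update_of_ne hw _ _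
  -- monotonicity of individual scores
  have hmono1 : ∀ x : C, x ≠ c → appScore A x ≤ appScore A' x := by
    intro x hx
    apply Finset.card_le_card
    intro w hw
    simp only [mem_filter] at hw ⊢
    refine ⟨hw.1, ?_⟩
    by_cases hwv : w = v
    · subst hwv
      rw [hAv]
      exact mem_insert_of_mem (mem_erase.2 ⟨hx, hw.2⟩)
    · rw [hAw w hwv]; exact hw.2
  have hmono2 : ∀ y : C, y ≠ d → appScore A' y ≤ appScore A y := by
    intro y hy
    apply Finset.card_le_card
    intro w hw
    simp only [mem_filter] at hw ⊢
    refine ⟨hw.1, ?_⟩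
    by_cases hwv : w = v
    · subst hwv
      have := hw.2
      rw [hAv] at this
      rcases mem_insert.1 this with h | h
      · exact absurd h hy
      · exact mem_of_mem_erase h
    · rw [← hAw w hwv]; exact hw.2
  -- optimality of W implies score comparison
  have hWopt : ∀ x ∈ W, ∀ y, y ∉ W → appScore A y ≤ appScore A x := by
    intro x hx y hy
    have hyW : y ∉ W.erase x := fun h => hy (mem_of_mem_erase h)
    have hk1 : 1 ≤ k := by
      have := Finset.card_pos.2 ⟨x, hx⟩; omega
    have hS : (insert y (W.erase x)).card = k := by
      rw [card_insert_of_notMem hyW, card_erase_of_mem hx, hWcard]; omega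
    have h1 := hWwin _ hS
    have h2 : avScore A (insert y (W.erase x)) = appScore A y + avScore A (W.erase x) :=
      Finset.sum_insert hyW
    have h3 : avScore A (W.erase x) + appScore A x = avScore A W :=
      Finset.sum_erase_add _ _ hx
    omega
  -- pick T maximizing (k+1)*avScore A' + intersection with W over size-k sets
  obtain ⟨T, hTmem, hTmax⟩ := Finset.exists_max_image
    (Finset.powersetCard k (univ : Finset C))
    (fun S => (k + 1) * avScore A' S + (W ∩ S).card)
    ⟨W, Finset.mem_powersetCard_univ.2 hWcard⟩
  have hTcard : T.card = k := Finset.mem_powersetCard_univ.1 hTmem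
  refine ⟨T, hTcard, ?_, ?_⟩
  · -- T maximizes avScore A'
    intro S hS
    by_contra h
    push_neg at h
    have hfS := hTmax S (Finset.mem_powersetCard_univ.2 hS)
    have hWT : (W ∩ T).card ≤ k := by
      have := Finset.card_le_card (Finset.inter_subset_left (s₁ := W) (s₂ := T))
      omega
    have h1 : (k + 1) * avScore A' T + (k + 1) ≤ (k + 1) * avScore A' S := by
      calc (k + 1) * avScore A' T + (k + 1) = (k + 1) * (avScore A' T + 1) := by ring
        _ ≤ (k + 1) * avScore A' S := Nat.mul_le_mul_left _ h
    set p := (k + 1) * avScore A' T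
    set q := (k + 1) * avScore A' S
    omega
  · -- intersection is large
    by_contra hcon
    push_neg at hcon
    have hk2 : (W ∩ T).card + 2 ≤ k := by omega
    have hWd : 2 ≤ (W \ T).card := by
      have := Finset.card_inter_add_card_sdiff W T
      omega
    have hTd : 2 ≤ (T \ W).card := by
      have := Finset.card_inter_add_card_sdiff T W
      rw [Finset.inter_comm] at this
      omega
    obtain ⟨x, hxmem, hxc⟩ := Finset.exists_mem_ne (by omega : 1 < (W \ T).card) c
    obtain ⟨y, hymem, hyd⟩ := Finset.exists_mem_ne (by omega : 1 < (T \ W).card) d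
    obtain ⟨hxW, hxnT⟩ := Finset.mem_sdiff.1 hxmem
    obtain ⟨hyT, hynW⟩ := Finset.mem_sdiff.1 hymem
    have hsx : appScore A' y ≤ appScore A' x :=
      le_trans (hmono2 y hyd) (le_trans (hWopt x hxW y hynW) (hmono1 x hxc))
    have hxT' : x ∉ T.erase y := fun h => hxnT (mem_of_mem_erase h)
    have hT'card : (insert x (T.erase y)).card = k := by
      rw [card_insert_of_notMem hxT', card_erase_of_mem hyT, hTcard]; omega
    have h2 : avScore A' (insert x (T.erase y)) = appScore A' x + avScore A' (T.erase y) :=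
      Finset.sum_insert hxT'
    have h3 : avScore A' (T.erase y) + appScore A' y = avScore A' T :=
      Finset.sum_erase_add _ _ hyT
    have hscore : avScore A' T ≤ avScore A' (insert x (T.erase y)) := by omega
    have hinter : W ∩ insert x (T.erase y) = insert x (W ∩ T) := by
      ext z
      simp only [mem_inter, mem_insert, mem_erase]
      constructor
      · rintro ⟨hzW, rfl | ⟨_, hzT⟩⟩
        · exact Or.inl rfl
        · exact Or.inr ⟨hzW, hzT⟩
      · rintro (rfl | ⟨hzW, hzT⟩)
        · exact ⟨hxW, Or.inl rfl⟩
        · exact ⟨hzW, Or.inr ⟨fun h => hynW (h ▸ hzW), hzT⟩⟩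
    have hxWT : x ∉ W ∩ T := fun h => hxnT (Finset.mem_inter.1 h).2
    have hintercard : (W ∩ insert x (T.erase y)).card = (W ∩ T).card + 1 := by
      rw [hinter, card_insert_of_notMem hxWT]
    have hfT' := hTmax (insert x (T.erase y)) (Finset.mem_powersetCard_univ.2 hT'card)
    have hm : (k + 1) * avScore A' T ≤ (k + 1) * avScore A' (insert x (T.erase y)) :=
      Nat.mul_le_mul_left _ hscore
    set p := (k + 1) * avScore A' T
    set q := (k + 1) * avScore A' (insert x (T.erase y))
    omega
end

section
/- For every committee size k ≥ 1 there exist an approval election E with 2k candidates and an election E' obtained from E by adding a single approval, such that some SAV-winning size-k committee W of E is disjoint from every SAV-winning size-k committee of E'. Concretely: with candidates A = {a_1,…,a_k} and B = {b_1,…,b_k} and two voters v_1 approving exactly A and v_2 approving exactly B, the committee A is SAV-winning; after adding an approval for b_1 to v_1's vote, the unique SAV-winning committee is B. -/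
open Finset

/-- SAV score of a candidate: each voter distributes one point equally among
its approved candidates (voters with empty approval sets contribute nothing). -/
def savScore {V C : Type*} [Fintype V] [DecidableEq C]
    (A : V → Finset C) (c : C) : ℚ :=
  ∑ v : V, if c ∈ A v then ((A v).card : ℚ)⁻¹ else 0

/-- SAV score of a committee. -/
def savCommScore {V C : Type*} [Fintype V] [DecidableEq C]
    (A : V → Finset C) (S : Finset C) : ℚ :=
  ∑ c ∈ S, savScore A c

/-- A size-`k` committee is SAV-winning if its SAV score is maximal. -/
def savWinning {V C : Type*} [Fintype V] [DecidableEq C]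
    (A : V → Finset C) (k : ℕ) (S : Finset C) : Prop :=
  S.card = k ∧ ∀ T : Finset C, T.card = k → savCommScore A T ≤ savCommScore A S

/-- Candidates `a_1, …, a_k` (left) and `b_1, …, b_k` (right). -/
abbrev SAVCand (k : ℕ) := Fin k ⊕ Fin k

def savAset (k : ℕ) : Finset (SAVCand k) := Finset.univ.image Sum.inl
def savBset (k : ℕ) : Finset (SAVCand k) := Finset.univ.image Sum.inr

/-- Two voters: voter `true` approves exactly `A`, voter `false` approves exactly `B`. -/
def savProfile (k : ℕ) : Bool → Finset (SAVCand k) :=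
  fun b => if b then savAset k else savBset k

/-- The profile after adding an approval for `b_1` to voter `true`'s vote. -/
def savProfile' (k : ℕ) (hk : 0 < k) : Bool → Finset (SAVCand k) :=
  Function.update (savProfile k) true
    (insert (Sum.inr ⟨0, hk⟩) (savProfile k true))

-- auxiliary lemmas

lemma card_savAset (k : ℕ) : (savAset k).card = k := by
  simp [savAset, Finset.card_image_of_injective _ Sum.inl_injective]

lemma card_savBset (k : ℕ) : (savBset k).card = k := by
  simp [savBset, Finset.card_image_of_injective _ Sum.inr_injective]

lemma mem_savAset {k : ℕ} {c : SAVCand k} : c ∈ savAset k ↔ c.isLeft := by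
  cases c <;> simp [savAset]

lemma mem_savBset {k : ℕ} {c : SAVCand k} : c ∈ savBset k ↔ c.isRight := by
  cases c <;> simp [savBset]

lemma savScore_eq {k : ℕ} (A : Bool → Finset (SAVCand k)) (c : SAVCand k) :
    savScore A c = (if c ∈ A true then ((A true).card : ℚ)⁻¹ else 0)
      + (if c ∈ A false then ((A false).card : ℚ)⁻¹ else 0) := by
  simp [savScore, Fintype.sum_bool]

lemma prof'_true {k : ℕ} (hk : 0 < k) :
    savProfile' k hk true = insert (Sum.inr ⟨0, hk⟩) (savAset k) := by
  simp [savProfile', savProfile]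

lemma prof'_false {k : ℕ} (hk : 0 < k) :
    savProfile' k hk false = savBset k := by
  simp [savProfile', savProfile, Function.update]

lemma card_insert_b1 {k : ℕ} (hk : 0 < k) :
    (insert (Sum.inr ⟨0, hk⟩ : SAVCand k) (savAset k)).card = k + 1 := by
  rw [Finset.card_insert_of_notMem (by simp [mem_savAset]), card_savAset]

lemma score0 {k : ℕ} (c : SAVCand k) : savScore (savProfile k) c = (k : ℚ)⁻¹ := by
  rw [savScore_eq]
  cases c <;> simp [savProfile, mem_savAset, mem_savBset, card_savAset, card_savBset]

lemma score'_inl {k : ℕ} (hk : 0 < k) (i : Fin k) :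
    savScore (savProfile' k hk) (Sum.inl i) = ((k : ℚ) + 1)⁻¹ := by
  rw [savScore_eq, prof'_true, prof'_false, card_insert_b1]
  simp [mem_savAset, mem_savBset]

lemma score'_inr {k : ℕ} (hk : 0 < k) (j : Fin k) :
    savScore (savProfile' k hk) (Sum.inr j) =
      (if j = ⟨0, hk⟩ then ((k : ℚ) + 1)⁻¹ else 0) + (k : ℚ)⁻¹ := by
  rw [savScore_eq, prof'_true, prof'_false, card_insert_b1, card_savBset]
  by_cases h : j = ⟨0, hk⟩ <;>
    simp [h, mem_savAset, mem_savBset]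

/-- SAV is k-Add-robust, witnessed by this concrete election:
`A` is SAV-winning in `E`, but after adding one approval (for `b_1` in `v_1`'s vote),
the unique SAV-winning committee is `B`, which is disjoint from `A`. -/
theorem sav_k_add_robust (k : ℕ) (hk : 0 < k) :
    savWinning (savProfile k) k (savAset k) ∧
    savWinning (savProfile' k hk) k (savBset k) ∧
    (∀ W' : Finset (SAVCand k), savWinning (savProfile' k hk) k W' → W' = savBset k) ∧
    Disjoint (savAset k) (savBset k) := by
  have hk0 : (0:ℚ) < (k:ℚ) := by exact_mod_cast hk
  have hk1 : (0:ℚ) < (k:ℚ) + 1 := by linarith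
  have hlt : ((k:ℚ) + 1)⁻¹ < (k:ℚ)⁻¹ := by
    apply inv_strictAnti₀ hk0; linarith
  set b1 : SAVCand k := Sum.inr ⟨0, hk⟩ with hb1
  set f : SAVCand k → ℚ := savScore (savProfile' k hk) with hf
  set g : SAVCand k → ℚ :=
    fun c => (if c = b1 then ((k:ℚ) + 1)⁻¹ else 0) + (k:ℚ)⁻¹ with hg
  have hfg : ∀ c, f c ≤ g c := by
    intro c
    cases c with
    | inl i =>
        rw [hf, hg]; simp [score'_inl hk, hb1]
        linarith
    | inr j =>
        rw [hf, hg]; simp [score'_inr hk, hb1]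
  have hfg_eq : ∀ j : Fin k, f (Sum.inr j) = g (Sum.inr j) := by
    intro j; rw [hf, hg]; simp [score'_inr hk, hb1]
  have hsum_g : ∀ T : Finset (SAVCand k), T.card = k →
      ∑ c ∈ T, g c ≤ ∑ c ∈ savBset k, g c := by
    intro T hT
    have h1 : ∀ S : Finset (SAVCand k), ∑ c ∈ S, g c =
        (if b1 ∈ S then ((k:ℚ) + 1)⁻¹ else 0) + S.card * (k:ℚ)⁻¹ := by
      intro S
      rw [hg]
      rw [Finset.sum_add_distrib, Finset.sum_ite_eq' S b1 (fun _ => ((k:ℚ)+1)⁻¹),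
        Finset.sum_const]
      simp [nsmul_eq_mul]
    rw [h1, h1, hT, card_savBset]
    have hb1B : b1 ∈ savBset k := by simp [hb1, mem_savBset]
    rw [if_pos hb1B]
    split
    · exact le_refl _
    · linarith [inv_pos.mpr hk1]
  have hBfg : savCommScore (savProfile' k hk) (savBset k) = ∑ c ∈ savBset k, g c := by
    rw [savCommScore]
    apply Finset.sum_congr rfl
    intro c hc
    cases c with
    | inl i => simp [mem_savBset] at hc
    | inr j => exact hfg_eq j
  have hle : ∀ T : Finset (SAVCand k), T.card = k →
      savCommScore (savProfile' k hk) T ≤ savCommScore (savProfile' k hk) (savBset k) := by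
    intro T hT
    rw [hBfg, savCommScore]
    calc ∑ c ∈ T, f c ≤ ∑ c ∈ T, g c := Finset.sum_le_sum (fun c _ => hfg c)
      _ ≤ _ := hsum_g T hT
  have hslt : ∀ T : Finset (SAVCand k), T.card = k → T ≠ savBset k →
      savCommScore (savProfile' k hk) T < savCommScore (savProfile' k hk) (savBset k) := by
    intro T hT hne
    have hns : ¬ T ⊆ savBset k := by
      intro hsub
      exact hne (Finset.eq_of_subset_of_card_le hsub (by rw [hT, card_savBset]))
    obtain ⟨c, hcT, hcB⟩ := Finset.not_subset.mp hns
    have hflt : f c < g c := by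
      cases c with
      | inl i =>
          rw [hf, hg]; simp [score'_inl hk, hb1]
          linarith
      | inr j => simp [mem_savBset] at hcB
    rw [hBfg, savCommScore]
    calc ∑ c ∈ T, f c < ∑ c ∈ T, g c := Finset.sum_lt_sum (fun c _ => hfg c) ⟨c, hcT, hflt⟩
      _ ≤ _ := hsum_g T hT
  have part1score : ∀ S : Finset (SAVCand k),
      savCommScore (savProfile k) S = S.card * (k:ℚ)⁻¹ := by
    intro S
    rw [savCommScore, Finset.sum_congr rfl (fun c _ => score0 c), Finset.sum_const,
      nsmul_eq_mul]
  refine ⟨⟨card_savAset k, ?_⟩, ⟨card_savBset k, hle⟩, ?_, ?_⟩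
  · intro T hT
    rw [part1score, part1score, hT, card_savAset]
  · intro W' hW'
    obtain ⟨hcard, hmax⟩ := hW'
    by_contra hne
    have h1 := hslt W' hcard hne
    have h2 := hmax (savBset k) (card_savBset k)
    linarith
  · rw [Finset.disjoint_left]
    intro a ha hb
    cases a <;> simp [mem_savAset, mem_savBset] at ha hb
end

section
/- Under SAV with committee size k, if election E' is obtained from E by swapping a single approval in one vote (moving an approval from candidate c to candidate d in the same vote), then for every SAV-winning committee W of E there exists an SAV-winning committee W' of E' with |W ∩ W'| ≥ k − 1. -/
open Finset

lemma savComm_exchange {V C : Type*} [Fintype V] [DecidableEq C]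
    (A : V → Finset C) (S : Finset C) {e f : C} (hf : f ∈ S) (he : e ∉ S) :
    savCommScore A (insert e (S.erase f)) =
      savCommScore A S - savScore A f + savScore A e := by
  unfold savCommScore
  rw [Finset.sum_insert (fun h => he (Finset.mem_of_mem_erase h)),
    Finset.sum_erase_eq_sub hf]
  ring

/-- SAV is 1-Swap-robust. -/
theorem sav_swap_robustness_level_one
    {V C : Type*} [Fintype V] [Fintype C] [DecidableEq V] [DecidableEq C]
    (A : V → Finset C) (k : ℕ) (v : V) (c d : C)
    (hc : c ∈ A v) (hd : d ∉ A v)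
    (A' : V → Finset C) (hA' : A' = Function.update A v (insert d ((A v).erase c)))
    (W : Finset C) (hWcard : W.card = k)
    (hWwin : ∀ S : Finset C, S.card = k → savCommScore A S ≤ savCommScore A W) :
    ∃ W' : Finset C, W'.card = k ∧
      (∀ S : Finset C, S.card = k → savCommScore A' S ≤ savCommScore A' W') ∧
      k - 1 ≤ (W ∩ W').card := by
  have hdc : d ≠ c := fun h => hd (h ▸ hc)
  have hdprime : d ∉ (A v).erase c := fun h => hd (Finset.mem_of_mem_erase h)
  have hAv : (A' v) = insert d ((A v).erase c) := by
    rw [hA']; simp [Function.update]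
  have hAu : ∀ u : V, u ≠ v → A' u = A u := by
    intro u hu; rw [hA']; simp [Function.update, hu]
  have hAvpos : 1 ≤ (A v).card := Finset.card_pos.2 ⟨c, hc⟩
  have hcardv : (A' v).card = (A v).card := by
    rw [hAv, Finset.card_insert_of_notMem hdprime, Finset.card_erase_of_mem hc]
    omega
  -- score relations
  have hle_of_ne_d : ∀ f : C, f ≠ d → savScore A' f ≤ savScore A f := by
    intro f hf
    apply Finset.sum_le_sum
    intro u _
    by_cases hu : u = v
    · rw [hu]
      by_cases hfc : f ∈ (A v).erase c
      · have h1 : f ∈ A' v := by rw [hAv]; exact Finset.mem_insert_of_mem hfc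
        have h2 : f ∈ A v := Finset.mem_of_mem_erase hfc
        rw [if_pos h1, if_pos h2, hcardv]
      · have h1 : f ∉ A' v := by rw [hAv]; simp [hf, hfc]
        rw [if_neg h1]
        by_cases hfa : f ∈ A v
        · rw [if_pos hfa]; positivity
        · rw [if_neg hfa]
    · rw [hAu u hu]
  have hge_of_ne_c : ∀ e : C, e ≠ c → savScore A e ≤ savScore A' e := by
    intro e he
    apply Finset.sum_le_sum
    intro u _
    by_cases hu : u = v
    · rw [hu]
      by_cases hea : e ∈ A v
      · have h1 : e ∈ A' v := by
          rw [hAv]; exact Finset.mem_insert_of_mem (Finset.mem_erase.2 ⟨he, hea⟩)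
        rw [if_pos hea, if_pos h1, hcardv]
      · rw [if_neg hea]
        by_cases heb : e ∈ A' v
        · rw [if_pos heb]; positivity
        · rw [if_neg heb]
    · rw [hAu u hu]
  -- members of W dominate non-members in A-score
  have hdom : ∀ e ∈ W, ∀ f ∉ W, savScore A f ≤ savScore A e := by
    intro e he f hf
    have hfe : f ∉ W.erase e := fun h => hf (Finset.mem_of_mem_erase h)
    have hk : 1 ≤ k := hWcard ▸ Finset.card_pos.2 ⟨e, he⟩
    have hcard : (insert f (W.erase e)).card = k := by
      rw [Finset.card_insert_of_notMem hfe, Finset.card_erase_of_mem he, hWcard]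
      omega
    have := hWwin _ hcard
    rw [savComm_exchange A W he hf] at this
    linarith
  -- dominance under A'
  have hdom' : ∀ e ∈ W, ∀ f ∉ W, e ≠ c → f ≠ d → savScore A' f ≤ savScore A' e := by
    intro e he f hf hec hfd
    calc savScore A' f ≤ savScore A f := hle_of_ne_d f hfd
      _ ≤ savScore A e := hdom e he f hf
      _ ≤ savScore A' e := hge_of_ne_c e hec
  -- main induction
  suffices h : ∀ n : ℕ, ∀ S : Finset C, S.card = k →
      (∀ T : Finset C, T.card = k → savCommScore A' T ≤ savCommScore A' S) →
      (W \ S).card ≤ n →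
      ∃ W' : Finset C, W'.card = k ∧
        (∀ T : Finset C, T.card = k → savCommScore A' T ≤ savCommScore A' W') ∧
        k - 1 ≤ (W ∩ W').card by
    obtain ⟨S, hS, hSmax⟩ := Finset.exists_max_image (Finset.univ.powersetCard k)
      (savCommScore A') ⟨W, Finset.mem_powersetCard.2 ⟨Finset.subset_univ _, hWcard⟩⟩
    have hSk : S.card = k := (Finset.mem_powersetCard.1 hS).2
    exact h (W \ S).card S hSk
      (fun T hT => hSmax T (Finset.mem_powersetCard.2 ⟨Finset.subset_univ _, hT⟩))
      le_rfl
  intro n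
  induction n with
  | zero =>
    intro S hSk hSmax hWS
    refine ⟨S, hSk, hSmax, ?_⟩
    have := Finset.card_inter_add_card_sdiff W S
    omega
  | succ n ih =>
    intro S hSk hSmax hWS
    by_cases hsmall : (W \ S).card ≤ 1
    · refine ⟨S, hSk, hSmax, ?_⟩
      have := Finset.card_inter_add_card_sdiff W S
      omega
    · push_neg at hsmall
      -- pick e ∈ W \ S with e ≠ c
      obtain ⟨a, b, ha, hb, hab⟩ := Finset.one_lt_card_iff.1 hsmall
      have hexe : ∃ e ∈ W \ S, e ≠ c := by
        by_cases hac : a = c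
        · exact ⟨b, hb, fun h => hab (by rw [hac, h])⟩
        · exact ⟨a, ha, hac⟩
      obtain ⟨e, he, hec⟩ := hexe
      -- pick f ∈ S \ W with f ≠ d
      have hcards : (S \ W).card = (W \ S).card :=
        Finset.card_sdiff_comm (by omega)
      have hsmall' : 1 < (S \ W).card := by omega
      obtain ⟨a', b', ha', hb', hab'⟩ := Finset.one_lt_card_iff.1 hsmall'
      have hexf : ∃ f ∈ S \ W, f ≠ d := by
        by_cases had : a' = d
        · exact ⟨b', hb', fun h => hab' (by rw [had, h])⟩
        · exact ⟨a', ha', had⟩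
      obtain ⟨f, hf, hfd⟩ := hexf
      have heW : e ∈ W := (Finset.mem_sdiff.1 he).1
      have heS : e ∉ S := (Finset.mem_sdiff.1 he).2
      have hfS : f ∈ S := (Finset.mem_sdiff.1 hf).1
      have hfW : f ∉ W := (Finset.mem_sdiff.1 hf).2
      set S' := insert e (S.erase f) with hS'
      have heSf : e ∉ S.erase f := fun h => heS (Finset.mem_of_mem_erase h)
      have hk1 : 1 ≤ k := hSk ▸ Finset.card_pos.2 ⟨f, hfS⟩
      have hS'k : S'.card = k := by
        rw [hS', Finset.card_insert_of_notMem heSf, Finset.card_erase_of_mem hfS, hSk]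
        omega
      have hscore : savCommScore A' S ≤ savCommScore A' S' := by
        rw [hS', savComm_exchange A' S hfS heS]
        have := hdom' e heW f hfW hec hfd
        linarith
      have hS'max : ∀ T : Finset C, T.card = k → savCommScore A' T ≤ savCommScore A' S' :=
        fun T hT => le_trans (hSmax T hT) hscore
      have hWS' : W \ S' = (W \ S).erase e := by
        ext x
        by_cases hxf : x = f
        · subst hxf
          simp [hS', hfW]
        · simp only [hS', Finset.mem_sdiff, Finset.mem_insert, Finset.mem_erase, hxf,
            ne_eq, not_false_eq_true, true_and, not_or]
          tauto
      have hWS'card : (W \ S').card ≤ n := by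
        rw [hWS', Finset.card_erase_of_mem he]
        omega
      exact ih S' hS'k hS'max hWS'card
end

section
/- Let k ≥ 1 and consider the SAV election with candidates {s} ∪ A ∪ B ∪ C ∪ D where |A| = k, |B| = k−1, |C| = |D| = k+3, and three voters: v_1 approves A ∪ {s}, v_2 approves B ∪ C, v_3 approves B ∪ D. Then B ∪ {s} is an SAV-winning size-k committee (with score k/(k+1)), but after removing v_1's approval of s, the unique SAV-winning size-k committee is A (with score 1), which is disjoint from B ∪ {s}. -/
open Finset

/-- Candidates: `s`, then `A` (k), `B` (k-1), `C` (k+3), `D` (k+3), pairwise disjoint. -/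
abbrev RCand (k : ℕ) := Unit ⊕ (Fin k ⊕ (Fin (k - 1) ⊕ (Fin (k + 3) ⊕ Fin (k + 3))))

def sCand (k : ℕ) : RCand k := Sum.inl ()
def rAset (k : ℕ) : Finset (RCand k) := Finset.univ.image (fun i => Sum.inr (Sum.inl i))
def rBset (k : ℕ) : Finset (RCand k) :=
  Finset.univ.image (fun i => Sum.inr (Sum.inr (Sum.inl i)))
def rCset (k : ℕ) : Finset (RCand k) :=
  Finset.univ.image (fun i => Sum.inr (Sum.inr (Sum.inr (Sum.inl i))))
def rDset (k : ℕ) : Finset (RCand k) :=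
  Finset.univ.image (fun i => Sum.inr (Sum.inr (Sum.inr (Sum.inr i))))

/-- Three voters: `v_1` approves `A ∪ {s}`, `v_2` approves `B ∪ C`, `v_3` approves `B ∪ D`. -/
def rProfile (k : ℕ) : Fin 3 → Finset (RCand k) :=
  fun v =>
    if v = 0 then insert (sCand k) (rAset k)
    else if v = 1 then rBset k ∪ rCset k
    else rBset k ∪ rDset k

/-- The profile after removing `v_1`'s approval of `s`. -/
def rProfile' (k : ℕ) : Fin 3 → Finset (RCand k) :=
  Function.update (rProfile k) 0 ((rProfile k 0).erase (sCand k))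
namespace SAVaux

variable (k : ℕ)

lemma s_not_A : sCand k ∉ rAset k := by simp [sCand, rAset]
lemma s_not_B : sCand k ∉ rBset k := by simp [sCand, rBset]
lemma s_not_C : sCand k ∉ rCset k := by simp [sCand, rCset]
lemma s_not_D : sCand k ∉ rDset k := by simp [sCand, rDset]

lemma card_A : (rAset k).card = k := by
  rw [rAset, Finset.card_image_of_injective _ (by intro a b h; simpa using h)]; simp

lemma card_B : (rBset k).card = k - 1 := by
  rw [rBset, Finset.card_image_of_injective _ (by intro a b h; simpa using h)]; simp

lemma card_C : (rCset k).card = k + 3 := by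
  rw [rCset, Finset.card_image_of_injective _ (by intro a b h; simpa using h)]; simp

lemma card_D : (rDset k).card = k + 3 := by
  rw [rDset, Finset.card_image_of_injective _ (by intro a b h; simpa using h)]; simp

lemma disj_BC : Disjoint (rBset k) (rCset k) := by
  simp [Finset.disjoint_left, rBset, rCset]

lemma disj_BD : Disjoint (rBset k) (rDset k) := by
  simp [Finset.disjoint_left, rBset, rDset]

lemma p0 : rProfile k 0 = insert (sCand k) (rAset k) := by simp [rProfile]
lemma p1 : rProfile k 1 = rBset k ∪ rCset k := by simp [rProfile]
lemma p2 : rProfile k 2 = rBset k ∪ rDset k := by simp [rProfile]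

lemma card_p0 : (rProfile k 0).card = k + 1 := by
  rw [p0, Finset.card_insert_of_notMem (s_not_A k), card_A]

lemma card_p1 (hk : 1 ≤ k) : (rProfile k 1).card = 2 * k + 2 := by
  rw [p1, Finset.card_union_of_disjoint (disj_BC k), card_B, card_C]; omega

lemma card_p2 (hk : 1 ≤ k) : (rProfile k 2).card = 2 * k + 2 := by
  rw [p2, Finset.card_union_of_disjoint (disj_BD k), card_B, card_D]; omega

end SAVaux
namespace SAVaux
variable (k : ℕ)

lemma kq_pos (hk : 1 ≤ k) : (0:ℚ) < (k:ℚ) := by exact_mod_cast hk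
lemma k1_pos : (0:ℚ) < (k:ℚ) + 1 := by positivity

lemma score_s (hk : 1 ≤ k) : savScore (rProfile k) (sCand k) = ((k:ℚ) + 1)⁻¹ := by
  rw [savScore, Fin.sum_univ_three]
  rw [if_pos (by rw [p0]; exact Finset.mem_insert_self _ _),
      if_neg (by rw [p1]; simp [sCand, rBset, rCset]),
      if_neg (by rw [p2]; simp [sCand, rBset, rDset])]
  rw [card_p0]; push_cast; ring

lemma score_a (hk : 1 ≤ k) (i : Fin k) :
    savScore (rProfile k) (Sum.inr (Sum.inl i)) = ((k:ℚ) + 1)⁻¹ := by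
  rw [savScore, Fin.sum_univ_three]
  rw [if_pos (by rw [p0]; simp [rAset, sCand]),
      if_neg (by rw [p1]; simp [rBset, rCset]),
      if_neg (by rw [p2]; simp [rBset, rDset])]
  rw [card_p0]; push_cast; ring

lemma score_b (hk : 1 ≤ k) (i : Fin (k-1)) :
    savScore (rProfile k) (Sum.inr (Sum.inr (Sum.inl i))) = ((k:ℚ) + 1)⁻¹ := by
  rw [savScore, Fin.sum_univ_three]
  rw [if_neg (by rw [p0]; simp [rAset, sCand]),
      if_pos (by rw [p1]; simp [rBset, rCset]),
      if_pos (by rw [p2]; simp [rBset, rDset])]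
  rw [card_p1 k hk, card_p2 k hk]
  have h : ((k:ℚ) + 1) ≠ 0 := ne_of_gt (k1_pos k)
  push_cast; field_simp; ring

lemma score_c (hk : 1 ≤ k) (i : Fin (k+3)) :
    savScore (rProfile k) (Sum.inr (Sum.inr (Sum.inr (Sum.inl i)))) = ((2*(k:ℚ) + 2))⁻¹ := by
  rw [savScore, Fin.sum_univ_three]
  rw [if_neg (by rw [p0]; simp [rAset, sCand]),
      if_pos (by rw [p1]; simp [rBset, rCset]),
      if_neg (by rw [p2]; simp [rBset, rDset])]
  rw [card_p1 k hk]; push_cast; ring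

lemma score_d (hk : 1 ≤ k) (i : Fin (k+3)) :
    savScore (rProfile k) (Sum.inr (Sum.inr (Sum.inr (Sum.inr i)))) = ((2*(k:ℚ) + 2))⁻¹ := by
  rw [savScore, Fin.sum_univ_three]
  rw [if_neg (by rw [p0]; simp [rAset, sCand]),
      if_neg (by rw [p1]; simp [rBset, rCset]),
      if_pos (by rw [p2]; simp [rBset, rDset])]
  rw [card_p2 k hk]; push_cast; ring

lemma half_le (hk : 1 ≤ k) : (2*(k:ℚ) + 2)⁻¹ ≤ ((k:ℚ) + 1)⁻¹ := by
  apply inv_anti₀ (k1_pos k); linarith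

lemma score_bound (hk : 1 ≤ k) (c : RCand k) :
    savScore (rProfile k) c ≤ ((k:ℚ) + 1)⁻¹ := by
  rcases c with _ | (i | (i | (i | i)))
  · exact le_of_eq (score_s k hk)
  · exact le_of_eq (score_a k hk i)
  · exact le_of_eq (score_b k hk i)
  · rw [score_c k hk i]; exact half_le k hk
  · rw [score_d k hk i]; exact half_le k hk

end SAVaux
namespace SAVaux
variable (k : ℕ)

lemma card_BC (hk : 1 ≤ k) : (rBset k ∪ rCset k).card = 2 * k + 2 := by
  rw [Finset.card_union_of_disjoint (disj_BC k), card_B, card_C]; omega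
lemma card_BD (hk : 1 ≤ k) : (rBset k ∪ rDset k).card = 2 * k + 2 := by
  rw [Finset.card_union_of_disjoint (disj_BD k), card_B, card_D]; omega

lemma p'0 : rProfile' k 0 = rAset k := by
  rw [rProfile', Function.update_self, p0, Finset.erase_insert (s_not_A k)]
lemma p'1 : rProfile' k 1 = rBset k ∪ rCset k := by
  rw [rProfile', Function.update_of_ne (by decide), p1]
lemma p'2 : rProfile' k 2 = rBset k ∪ rDset k := by
  rw [rProfile', Function.update_of_ne (by decide), p2]

lemma score'_s : savScore (rProfile' k) (sCand k) = 0 := by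
  rw [savScore, Fin.sum_univ_three]
  rw [if_neg (by rw [p'0]; exact s_not_A k),
      if_neg (by rw [p'1]; simp [sCand, rBset, rCset]),
      if_neg (by rw [p'2]; simp [sCand, rBset, rDset])]
  ring

lemma score'_a (i : Fin k) :
    savScore (rProfile' k) (Sum.inr (Sum.inl i)) = ((k:ℚ))⁻¹ := by
  rw [savScore, Fin.sum_univ_three]
  rw [if_pos (by rw [p'0]; simp [rAset]),
      if_neg (by rw [p'1]; simp [rBset, rCset]),
      if_neg (by rw [p'2]; simp [rBset, rDset])]
  rw [p'0, card_A]; ring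

lemma score'_b (hk : 1 ≤ k) (i : Fin (k-1)) :
    savScore (rProfile' k) (Sum.inr (Sum.inr (Sum.inl i))) = ((k:ℚ) + 1)⁻¹ := by
  rw [savScore, Fin.sum_univ_three]
  rw [if_neg (by rw [p'0]; simp [rAset]),
      if_pos (by rw [p'1]; simp [rBset, rCset]),
      if_pos (by rw [p'2]; simp [rBset, rDset])]
  rw [p'1, p'2, card_BC k hk, card_BD k hk]
  have h : ((k:ℚ) + 1) ≠ 0 := ne_of_gt (k1_pos k)
  push_cast; field_simp; ring

lemma score'_c (hk : 1 ≤ k) (i : Fin (k+3)) :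
    savScore (rProfile' k) (Sum.inr (Sum.inr (Sum.inr (Sum.inl i)))) = (2*(k:ℚ) + 2)⁻¹ := by
  rw [savScore, Fin.sum_univ_three]
  rw [if_neg (by rw [p'0]; simp [rAset]),
      if_pos (by rw [p'1]; simp [rBset, rCset]),
      if_neg (by rw [p'2]; simp [rBset, rDset])]
  rw [p'1, card_BC k hk]
  push_cast; ring

lemma score'_d (hk : 1 ≤ k) (i : Fin (k+3)) :
    savScore (rProfile' k) (Sum.inr (Sum.inr (Sum.inr (Sum.inr i)))) = (2*(k:ℚ) + 2)⁻¹ := by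
  rw [savScore, Fin.sum_univ_three]
  rw [if_neg (by rw [p'0]; simp [rAset]),
      if_neg (by rw [p'1]; simp [rBset, rCset]),
      if_pos (by rw [p'2]; simp [rBset, rDset])]
  rw [p'2, card_BD k hk]
  push_cast; ring

lemma k1_le_k (hk : 1 ≤ k) : ((k:ℚ) + 1)⁻¹ ≤ ((k:ℚ))⁻¹ := by
  apply inv_anti₀ (kq_pos k hk); linarith

lemma score'_bound_all (hk : 1 ≤ k) (c : RCand k) :
    savScore (rProfile' k) c ≤ ((k:ℚ))⁻¹ := by
  have h2 : (2*(k:ℚ) + 2)⁻¹ ≤ ((k:ℚ))⁻¹ := by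
    apply inv_anti₀ (kq_pos k hk); linarith
  rcases c with ⟨⟩ | (i | (i | (i | i)))
  · show savScore (rProfile' k) (sCand k) ≤ _
    rw [score'_s]; positivity
  · exact le_of_eq (score'_a k i)
  · rw [score'_b k hk i]; exact k1_le_k k hk
  · rw [score'_c k hk i]; exact h2
  · rw [score'_d k hk i]; exact h2

lemma score'_bound_notA (hk : 1 ≤ k) (c : RCand k) (hc : c ∉ rAset k) :
    savScore (rProfile' k) c ≤ ((k:ℚ) + 1)⁻¹ := by
  rcases c with ⟨⟩ | (i | (i | (i | i)))
  · show savScore (rProfile' k) (sCand k) ≤ _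
    rw [score'_s]; positivity
  · exact absurd (by simp [rAset]) hc
  · exact le_of_eq (score'_b k hk i)
  · rw [score'_c k hk i]; exact half_le k hk
  · rw [score'_d k hk i]; exact half_le k hk

end SAVaux
namespace SAVaux
variable (k : ℕ)

lemma card_sB (hk : 1 ≤ k) : (insert (sCand k) (rBset k)).card = k := by
  rw [Finset.card_insert_of_notMem (s_not_B k), card_B]; omega

lemma score_sB (hk : 1 ≤ k) :
    savCommScore (rProfile k) (insert (sCand k) (rBset k)) = (k : ℚ) / (k + 1) := by
  rw [savCommScore]
  rw [Finset.sum_congr rfl (fun c hc => ?_), Finset.sum_const, card_sB k hk,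
      nsmul_eq_mul, div_eq_mul_inv]
  rcases Finset.mem_insert.mp hc with rfl | hb
  · exact score_s k hk
  · obtain ⟨i, _, rfl⟩ := Finset.mem_image.mp hb
    exact score_b k hk i

lemma score'_A (hk : 1 ≤ k) : savCommScore (rProfile' k) (rAset k) = 1 := by
  rw [savCommScore]
  rw [Finset.sum_congr rfl (fun c hc => ?_), Finset.sum_const, card_A,
      nsmul_eq_mul, mul_inv_cancel₀ (ne_of_gt (kq_pos k hk))]
  obtain ⟨i, _, rfl⟩ := Finset.mem_image.mp hc
  exact score'_a k i

lemma comm_bound' (hk : 1 ≤ k) (T : Finset (RCand k)) (hT : T.card = k)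
    (hne : T ≠ rAset k) : savCommScore (rProfile' k) T < 1 := by
  set m := (T ∩ rAset k).card with hm
  set n := (T \ rAset k).card with hn
  have hmn : m + n = k := by rw [hm, hn, Finset.card_inter_add_card_sdiff, hT]
  have hmk : m < k := by
    have hle : m ≤ k := by
      rw [hm]; calc (T ∩ rAset k).card ≤ (rAset k).card :=
        Finset.card_le_card Finset.inter_subset_right
      _ = k := card_A k
    rcases lt_or_eq_of_le hle with h | h
    · exact h
    · exfalso; apply hne
      have h1 : T ∩ rAset k = rAset k :=
        Finset.eq_of_subset_of_card_le Finset.inter_subset_right (by rw [card_A]; omega)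
      have h2 : T ∩ rAset k = T :=
        Finset.eq_of_subset_of_card_le Finset.inter_subset_left (by rw [hT]; omega)
      rw [← h2, h1]
  have hsplit : savCommScore (rProfile' k) T =
      ∑ c ∈ T ∩ rAset k, savScore (rProfile' k) c +
      ∑ c ∈ T \ rAset k, savScore (rProfile' k) c := by
    rw [savCommScore, Finset.sum_inter_add_sum_sdiff]
  have b1 : ∑ c ∈ T ∩ rAset k, savScore (rProfile' k) c ≤ m • ((k:ℚ))⁻¹ :=
    Finset.sum_le_card_nsmul _ _ _ (fun c _ => score'_bound_all k hk c)
  have b2 : ∑ c ∈ T \ rAset k, savScore (rProfile' k) c ≤ n • ((k:ℚ)+1)⁻¹ :=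
    Finset.sum_le_card_nsmul _ _ _
      (fun c hc => score'_bound_notA k hk c (Finset.mem_sdiff.mp hc).2)
  have harith : (m:ℚ) • ((k:ℚ))⁻¹ + (n:ℚ) • ((k:ℚ)+1)⁻¹ < 1 := by
    rw [smul_eq_mul, smul_eq_mul, inv_eq_one_div, inv_eq_one_div, mul_one_div, mul_one_div,
        div_add_div _ _ (ne_of_gt (kq_pos k hk)) (ne_of_gt (k1_pos k)),
        div_lt_one (by positivity)]
    have h1 : (m:ℚ) + n = k := by exact_mod_cast hmn
    have h2 : (m:ℚ) < k := by exact_mod_cast hmk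
    nlinarith
  calc savCommScore (rProfile' k) T ≤ m • ((k:ℚ))⁻¹ + n • ((k:ℚ)+1)⁻¹ := by
        rw [hsplit]; exact add_le_add b1 b2
  _ < 1 := by rw [nsmul_eq_mul, nsmul_eq_mul] at *; simpa using harith

end SAVaux

open SAVaux

/-- SAV is k-Remove-robust, witnessed by this concrete election:
`B ∪ {s}` is SAV-winning with score `k/(k+1)`; after removing `v_1`'s approval of `s`,
the unique SAV-winning committee is `A`, with score `1`, disjoint from `B ∪ {s}`. -/
theorem sav_k_remove_robust (k : ℕ) (hk : 1 ≤ k) :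
    savWinning (rProfile k) k (insert (sCand k) (rBset k)) ∧
    savCommScore (rProfile k) (insert (sCand k) (rBset k)) = (k : ℚ) / (k + 1) ∧
    savWinning (rProfile' k) k (rAset k) ∧
    (∀ W' : Finset (RCand k), savWinning (rProfile' k) k W' → W' = rAset k) ∧
    savCommScore (rProfile' k) (rAset k) = 1 ∧
    Disjoint (rAset k) (insert (sCand k) (rBset k)) := by
  refine ⟨⟨card_sB k hk, fun T hT => ?_⟩, score_sB k hk, ⟨card_A k, fun T hT => ?_⟩,
    fun W' hW => ?_, score'_A k hk, ?_⟩
  · calc savCommScore (rProfile k) T ≤ T.card • ((k:ℚ)+1)⁻¹ :=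
      Finset.sum_le_card_nsmul _ _ _ (fun c _ => score_bound k hk c)
    _ = (k:ℚ) / (k+1) := by rw [hT, nsmul_eq_mul, div_eq_mul_inv]
    _ = savCommScore (rProfile k) (insert (sCand k) (rBset k)) := (score_sB k hk).symm
  · rcases eq_or_ne T (rAset k) with rfl | hne
    · exact le_refl _
    · rw [score'_A k hk]; exact le_of_lt (comm_bound' k hk T hT hne)
  · by_contra hne
    have h1 := hW.2 (rAset k) (card_A k)
    rw [score'_A k hk] at h1
    exact absurd h1 (not_le.mpr (comm_bound' k hk W' hW.1 hne))
  · rw [Finset.disjoint_left]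
    intro a ha
    obtain ⟨i, _, rfl⟩ := Finset.mem_image.mp ha
    simp [rBset, sCand]
end

section
/- Let ω = (ω_1,…,ω_k) with 1 = ω_1 > ω_2 ≥ ⋯ ≥ ω_k ≥ 0 define a unit-decreasing Thiele rule. Consider the election with candidates A = {a_1,…,a_k} ∪ B = {b_1,…,b_k} (disjoint), voters v_{i,j} for i,j ∈ [k] approving exactly {a_i, b_j}, and one voter v^s with empty approval set. Then every size-k committee has ω-score at most k², and B achieves score exactly k², so B is winning. If E' is obtained by adding an approval for a_1 to v^s, then A is the unique ω-winning committee of E', with score k² + 1. In particular, the unit-decreasing Thiele rule is k-Add-robust: the winning committee B of E is disjoint from the unique winning committee A of E'. -/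
/-!
Write `L = #S.toLeft` and `R = #S.toRight`. Since `ω 0 = 1`, the voter `v_{i,j}` contributes
`[a_i ∈ S] + [b_j ∈ S] - [a_i ∈ S] [b_j ∈ S] (1 - ω 1)`, so summing over the `k²` voters
gives `k L + k R - L R (1 - ω 1)`, which is `k² - L R (1 - ω 1) ≤ k²` when `L + R = k`.
The new approval adds `[a_1 ∈ S]`, so a committee reaching `k² + 1` in `E'` contains `a_1`
and has `L R (1 - ω 1) = 0`; since `ω 1 < 1` as soon as both sides are represented
(then `k ≥ 2`), this forces `R = 0`, that is `S = A`.
-/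

open Finset

/-- ω-Thiele score of committee `S`: each voter `v` contributes
`ω 0 + ω 1 + ⋯ + ω (|A(v) ∩ S| - 1)` (here `ω 0` plays the role of `ω_1`). -/
def thieleScore {V C : Type*} [Fintype V] [DecidableEq C]
    (ω : ℕ → ℚ) (A : V → Finset C) (S : Finset C) : ℚ :=
  ∑ v : V, ∑ i ∈ Finset.range ((A v ∩ S).card), ω i

/-- Candidates `a_1, …, a_k` (left) and `b_1, …, b_k` (right). -/
abbrev TCand (k : ℕ) := Fin k ⊕ Fin k

def tAset (k : ℕ) : Finset (TCand k) := Finset.univ.image Sum.inl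
def tBset (k : ℕ) : Finset (TCand k) := Finset.univ.image Sum.inr

/-- Voters `v_{i,j}` approving `{a_i, b_j}` and a voter `v^s` with empty approval set. -/
def tProfile (k : ℕ) : (Fin k × Fin k) ⊕ Unit → Finset (TCand k)
  | Sum.inl (i, j) => {Sum.inl i, Sum.inr j}
  | Sum.inr _ => ∅

/-- The profile after adding an approval for `a_1` to `v^s`'s vote. -/
def tProfile' (k : ℕ) (hk : 0 < k) : (Fin k × Fin k) ⊕ Unit → Finset (TCand k) :=
  Function.update (tProfile k) (Sum.inr ())
    (insert (Sum.inl ⟨0, hk⟩) (tProfile k (Sum.inr ())))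

lemma sum_range_card_pair_inter {C : Type*} [DecidableEq C] {ω : ℕ → ℚ} (hω0 : ω 0 = 1)
    {a b : C} (hab : a ≠ b) (S : Finset C) :
    ∑ m ∈ range (#({a, b} ∩ S)), ω m
      = (if a ∈ S then 1 else 0) + (if b ∈ S then 1 else 0)
        - (if a ∈ S then 1 else 0) * (if b ∈ S then 1 else 0) * (1 - ω 1) := by
  by_cases ha : a ∈ S <;> by_cases hb : b ∈ S <;>
    simp [ha, hb, hab, hω0, sum_range_succ, insert_inter_of_mem, insert_inter_of_notMem,
      singleton_inter_of_mem, singleton_inter_of_notMem]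

lemma sum_sum_add_sub_mul_mul {ι κ : Type*} [Fintype ι] [Fintype κ] (f : ι → ℚ)
    (g : κ → ℚ) (c : ℚ) :
    ∑ i, ∑ j, (f i + g j - f i * g j * c)
      = Fintype.card κ * ∑ i, f i + Fintype.card ι * ∑ j, g j
        - (∑ i, f i) * (∑ j, g j) * c := by
  simp only [sum_sub_distrib, sum_add_distrib, sum_const, card_univ, nsmul_eq_mul, sum_mul,
    mul_sum]
  rw [sum_comm (s := univ) (t := univ) (f := fun j i => f i * g j * c)]

lemma thieleScore_update {V C : Type*} [Fintype V] [DecidableEq V] [DecidableEq C]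
    (ω : ℕ → ℚ) (A : V → Finset C) (v : V) (T S : Finset C) :
    thieleScore ω (Function.update A v T) S + ∑ m ∈ range #(A v ∩ S), ω m
      = thieleScore ω A S + ∑ m ∈ range #(T ∩ S), ω m := by
  set g : Finset C → ℚ := fun B => ∑ m ∈ range #(B ∩ S), ω m
  have hupdate (u : V) : g (Function.update A v T u) = Function.update (g ∘ A) v (g T) u :=
    Function.apply_update (fun _ => g) A v T u
  simp only [thieleScore]
  change ∑ u, g (Function.update A v T u) + g (A v) = ∑ u, g (A u) + g T
  rw [Fintype.sum_congr _ _ hupdate, sum_update_of_mem (mem_univ v),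
    sum_eq_add_sum_sdiff_singleton_of_mem (mem_univ v) (fun u => g (A u))]
  simp only [Function.comp_apply]
  ring

lemma tAset_eq_disjSum (k : ℕ) : tAset k = univ.disjSum ∅ := by
  rw [disjSum_empty, map_eq_image]
  rfl

lemma tBset_eq_disjSum (k : ℕ) : tBset k = (∅ : Finset (Fin k)).disjSum univ := by
  rw [empty_disjSum, map_eq_image]
  rfl

lemma sum_ite_inl_mem_eq_card_toLeft {k : ℕ} (S : Finset (TCand k)) :
    ∑ i : Fin k, (if Sum.inl i ∈ S then (1 : ℚ) else 0) = #S.toLeft := by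
  rw [sum_boole]; congr 2; ext; simp

lemma sum_ite_inr_mem_eq_card_toRight {k : ℕ} (S : Finset (TCand k)) :
    ∑ i : Fin k, (if Sum.inr i ∈ S then (1 : ℚ) else 0) = #S.toRight := by
  rw [sum_boole]; congr 2; ext; simp

lemma thieleScore_tProfile {k : ℕ} {ω : ℕ → ℚ} (hω0 : ω 0 = 1) (S : Finset (TCand k)) :
    thieleScore ω (tProfile k) S
      = k * #S.toLeft + k * #S.toRight - #S.toLeft * #S.toRight * (1 - ω 1) := by
  have hpair (i j : Fin k) :
      tProfile k (Sum.inl (i, j)) = {Sum.inl i, Sum.inr j} := rfl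
  have hsilent : tProfile k (Sum.inr ()) = ∅ := rfl
  rw [thieleScore, Fintype.sum_sum_type, Fintype.sum_prod_type]
  simp only [hpair, sum_range_card_pair_inter hω0 Sum.inl_ne_inr, sum_sum_add_sub_mul_mul,
    hsilent, empty_inter, card_empty, range_zero, sum_empty, sum_const_zero, add_zero,
    Fintype.card_fin, sum_ite_inl_mem_eq_card_toLeft, sum_ite_inr_mem_eq_card_toRight]

lemma thieleScore_tProfile' {k : ℕ} (hk : 0 < k) {ω : ℕ → ℚ} (hω0 : ω 0 = 1)
    (S : Finset (TCand k)) :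
    thieleScore ω (tProfile' k hk) S
      = thieleScore ω (tProfile k) S + if Sum.inl ⟨0, hk⟩ ∈ S then 1 else 0 := by
  have h := thieleScore_update ω (tProfile k) (Sum.inr ()) {Sum.inl ⟨0, hk⟩} S
  have hsilent : tProfile k (Sum.inr ()) = ∅ := rfl
  by_cases ha : Sum.inl ⟨0, hk⟩ ∈ S <;>
    simp_all [tProfile', singleton_inter_of_mem, singleton_inter_of_notMem]

lemma thieleScore_tProfile_of_card_eq {k : ℕ} {ω : ℕ → ℚ} (hω0 : ω 0 = 1)
    {S : Finset (TCand k)} (hS : #S = k) :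
    thieleScore ω (tProfile k) S = k ^ 2 - #S.toLeft * #S.toRight * (1 - ω 1) := by
  have hsplit : (#S.toLeft + #S.toRight : ℚ) = k := by
    exact_mod_cast (card_toLeft_add_card_toRight (u := S)).trans hS
  rw [thieleScore_tProfile hω0, ← hsplit]
  ring

lemma card_toLeft_mul_card_toRight_mul_pos {k : ℕ} {ω : ℕ → ℚ}
    (hω1 : 1 < k → ω 1 < 1) {S : Finset (TCand k)} (hS : #S = k)
    (hL : S.toLeft.Nonempty) (hR : S.toRight.Nonempty) :
    0 < (#S.toLeft * #S.toRight * (1 - ω 1) : ℚ) := by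
  have hL' := hL.card_pos
  have hR' := hR.card_pos
  have hk : 1 < k := by
    have := card_toLeft_add_card_toRight (u := S)
    omega
  have : (0 : ℚ) < 1 - ω 1 := sub_pos.2 (hω1 hk)
  positivity

lemma card_toLeft_mul_card_toRight_mul_nonneg {k : ℕ} {ω : ℕ → ℚ}
    (hω1 : 1 < k → ω 1 < 1) {S : Finset (TCand k)} (hS : #S = k) :
    0 ≤ (#S.toLeft * #S.toRight * (1 - ω 1) : ℚ) := by
  rcases S.toLeft.eq_empty_or_nonempty with hL | hL
  · simp [hL]
  rcases S.toRight.eq_empty_or_nonempty with hR | hR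
  · simp [hR]
  exact (card_toLeft_mul_card_toRight_mul_pos hω1 hS hL hR).le

lemma thieleScore_tProfile_le_sq {k : ℕ} {ω : ℕ → ℚ} (hω0 : ω 0 = 1)
    (hω1 : 1 < k → ω 1 < 1) {S : Finset (TCand k)} (hS : #S = k) :
    thieleScore ω (tProfile k) S ≤ k ^ 2 := by
  rw [thieleScore_tProfile_of_card_eq hω0 hS]
  linarith [card_toLeft_mul_card_toRight_mul_nonneg hω1 hS]

lemma eq_tAset_of_toRight_eq_empty {k : ℕ} {S : Finset (TCand k)} (hS : #S = k)
    (hR : S.toRight = ∅) : S = tAset k := by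
  have hL : S.toLeft = univ := by
    apply eq_univ_of_card
    simpa [hR, hS] using card_toLeft_add_card_toRight (u := S)
  rw [← toLeft_disjSum_toRight (u := S), hL, hR, tAset_eq_disjSum]

lemma eq_tAset_of_sq_add_one_le {k : ℕ} (hk : 0 < k) {ω : ℕ → ℚ} (hω0 : ω 0 = 1)
    (hω1 : 1 < k → ω 1 < 1) {S : Finset (TCand k)} (hS : #S = k)
    (hscore : k ^ 2 + 1 ≤ thieleScore ω (tProfile' k hk) S) : S = tAset k := by
  rw [thieleScore_tProfile' hk hω0, thieleScore_tProfile_of_card_eq hω0 hS] at hscore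
  have hpenalty := card_toLeft_mul_card_toRight_mul_nonneg hω1 hS
  by_cases ha : Sum.inl ⟨0, hk⟩ ∈ S
  · rw [if_pos ha] at hscore
    refine eq_tAset_of_toRight_eq_empty hS (S.toRight.eq_empty_or_nonempty.resolve_right ?_)
    intro hR
    linarith [card_toLeft_mul_card_toRight_mul_pos hω1 hS ⟨_, mem_toLeft.2 ha⟩ hR]
  · rw [if_neg ha] at hscore
    linarith

lemma thieleScore_tProfile_tBset {k : ℕ} {ω : ℕ → ℚ} (hω0 : ω 0 = 1) :
    thieleScore ω (tProfile k) (tBset k) = k ^ 2 := by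
  rw [thieleScore_tProfile hω0, tBset_eq_disjSum, toLeft_disjSum, toRight_disjSum]
  simp [sq]

lemma thieleScore_tProfile'_tAset {k : ℕ} (hk : 0 < k) {ω : ℕ → ℚ} (hω0 : ω 0 = 1) :
    thieleScore ω (tProfile' k hk) (tAset k) = k ^ 2 + 1 := by
  rw [thieleScore_tProfile' hk hω0, thieleScore_tProfile hω0, tAset_eq_disjSum, toLeft_disjSum,
    toRight_disjSum]
  simp [sq]

lemma card_tAset (k : ℕ) : #(tAset k) = k := by
  simp [tAset_eq_disjSum]

lemma disjoint_tAset_tBset (k : ℕ) : Disjoint (tAset k) (tBset k) := by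
  simp [tAset_eq_disjSum, tBset_eq_disjSum, disjoint_left]

theorem unit_decreasing_thiele_k_add_robust_general (k : ℕ) (hk : 0 < k) (ω : ℕ → ℚ)
    (hω0 : ω 0 = 1)
    (hωlt : ∀ i, 1 ≤ i → i < k → ω i < 1) :
    (∀ S : Finset (TCand k), S.card = k → thieleScore ω (tProfile k) S ≤ (k : ℚ) ^ 2) ∧
    thieleScore ω (tProfile k) (tBset k) = (k : ℚ) ^ 2 ∧
    (∀ S : Finset (TCand k), S.card = k →
      thieleScore ω (tProfile k) S ≤ thieleScore ω (tProfile k) (tBset k)) ∧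
    thieleScore ω (tProfile' k hk) (tAset k) = (k : ℚ) ^ 2 + 1 ∧
    (∀ S : Finset (TCand k), S.card = k →
      (∀ T : Finset (TCand k), T.card = k →
        thieleScore ω (tProfile' k hk) T ≤ thieleScore ω (tProfile' k hk) S) →
      S = tAset k) ∧
    Disjoint (tAset k) (tBset k) := by
  have hω1 : 1 < k → ω 1 < 1 := hωlt 1 le_rfl
  have hB := thieleScore_tProfile_tBset (k := k) hω0
  have hA := thieleScore_tProfile'_tAset hk hω0
  refine ⟨fun S hS => thieleScore_tProfile_le_sq hω0 hω1 hS, hB,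
    fun S hS => hB ▸ thieleScore_tProfile_le_sq hω0 hω1 hS, hA,
    fun S hS hmax => ?_, disjoint_tAset_tBset k⟩
  exact eq_tAset_of_sq_add_one_le hk hω0 hω1 hS (hA ▸ hmax _ (card_tAset k))

/-- for any unit-decreasing Thiele rule
(`1 = ω_1 > ω_2 ≥ ⋯ ≥ ω_k ≥ 0`, indexed here from `0`), in the above election
every size-`k` committee scores at most `k²`, `B` scores exactly `k²` (so is winning);
after adding an approval for `a_1` to `v^s`, `A` scores `k² + 1` and is the unique
winning committee; `A` and `B` are disjoint, so the rule is `k`-Add-robust. -/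
theorem unit_decreasing_thiele_k_add_robust (k : ℕ) (hk : 0 < k) (ω : ℕ → ℚ)
    (hω0 : ω 0 = 1)
    (hωlt : ∀ i, 1 ≤ i → i < k → ω i < 1)
    (hωmono : ∀ i j, i ≤ j → j < k → ω j ≤ ω i)
    (hωnonneg : ∀ i, i < k → 0 ≤ ω i) :
    (∀ S : Finset (TCand k), S.card = k → thieleScore ω (tProfile k) S ≤ (k : ℚ) ^ 2) ∧
    thieleScore ω (tProfile k) (tBset k) = (k : ℚ) ^ 2 ∧
    (∀ S : Finset (TCand k), S.card = k →
      thieleScore ω (tProfile k) S ≤ thieleScore ω (tProfile k) (tBset k)) ∧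
    thieleScore ω (tProfile' k hk) (tAset k) = (k : ℚ) ^ 2 + 1 ∧
    (∀ S : Finset (TCand k), S.card = k →
      (∀ T : Finset (TCand k), T.card = k →
        thieleScore ω (tProfile' k hk) T ≤ thieleScore ω (tProfile' k hk) S) →
      S = tAset k) ∧
    Disjoint (tAset k) (tBset k) :=
  unit_decreasing_thiele_k_add_robust_general k hk ω hω0 hωlt
end

section
/- Let E = (C,V) be an approval election with candidates ordered so that app_E(c_1) ≥ ⋯ ≥ app_E(c_m), and committee size k < m with app_E(c_k) > app_E(c_{k+1}). Then the minimum number of single-approval additions needed to change the set of AV-winning size-k committees is exactly app_E(c_k) − app_E(c_{k+1}). -/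
open Finset

/-- The set of AV-winning size-`k` committees. -/
def avWinners {V C : Type*} [Fintype V] [DecidableEq C]
    (A : V → Finset C) (k : ℕ) : Set (Finset C) :=
  {S | S.card = k ∧ ∀ T : Finset C, T.card = k → avScore A T ≤ avScore A S}

/-- `AddSeq n A A'`: `A'` is obtained from `A` by a sequence of `n` single-approval
additions. -/
def AddSeq {V C : Type*} [DecidableEq V] [DecidableEq C] :
    ℕ → (V → Finset C) → (V → Finset C) → Prop
  | 0, A, A' => A' = A
  | n + 1, A, A' => ∃ (A'' : V → Finset C) (v : V) (c : C),
      AddSeq n A A'' ∧ c ∉ A'' v ∧ A' = Function.update A'' v (insert c (A'' v))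

/-!
Let `T` be the top-`k` committee, `a = app(c_k)` and `b = app(c_{k+1})`: members of `T` score at
least `a`, everybody else at most `b < a`. A size-`k` committee `S ≠ T` trades at least one member
of `T` for an outsider, so it trails `T` by at least `a - b`. Each addition raises each committee
score by at most one, so after fewer than `a - b` additions `T` is still the unique winner.
Conversely, `a - b` approvals for `c_{k+1}` bring `T - c_k + c_{k+1}` level with `T`, and by the
same margin no committee overtakes it: it becomes a winner, which it was not before.
-/

section Sums

variable {α M : Type*} [DecidableEq α] [AddCommMonoid M] [PartialOrder M] [IsOrderedAddMonoid M]

theorem sum_add_card_sdiff_nsmul_le (f : α → M) {S T : Finset α} (hST : #S = #T) {a b : M}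
    (ha : ∀ x ∈ T, a ≤ f x) (hb : ∀ x ∉ T, f x ≤ b) :
    ∑ x ∈ S, f x + #(S \ T) • a ≤ ∑ x ∈ T, f x + #(S \ T) • b := by
  have hout : ∑ x ∈ S \ T, f x ≤ #(S \ T) • b :=
    sum_le_card_nsmul _ _ _ fun x hx => hb x (mem_sdiff.mp hx).2
  have hin : #(S \ T) • a ≤ ∑ x ∈ T \ S, f x := by
    rw [card_sdiff_comm hST]
    exact card_nsmul_le_sum _ _ _ fun x hx => ha x (mem_sdiff.mp hx).1
  calc ∑ x ∈ S, f x + #(S \ T) • a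
      = ∑ x ∈ S ∩ T, f x + ∑ x ∈ S \ T, f x + #(S \ T) • a := by
        rw [sum_inter_add_sum_sdiff]
    _ ≤ ∑ x ∈ T ∩ S, f x + #(S \ T) • b + ∑ x ∈ T \ S, f x := by
        rw [inter_comm]; gcongr
    _ = ∑ x ∈ T, f x + #(S \ T) • b := by
        rw [add_right_comm, sum_inter_add_sum_sdiff]

end Sums

theorem sum_add_sub_le_sum_of_ne {α : Type*} [DecidableEq α] (f : α → ℕ) {S T : Finset α}
    (hST : #S = #T) (hne : S ≠ T) {a b : ℕ} (hab : b ≤ a)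
    (ha : ∀ x ∈ T, a ≤ f x) (hb : ∀ x ∉ T, f x ≤ b) :
    ∑ x ∈ S, f x + (a - b) ≤ ∑ x ∈ T, f x := by
  have hd : 1 ≤ #(S \ T) := by
    by_contra! h0
    refine hne (eq_of_subset_of_card_le ?_ hST.ge)
    simpa [sdiff_eq_empty_iff_subset] using h0
  have key := sum_add_card_sdiff_nsmul_le f hST ha hb
  obtain ⟨g, rfl⟩ := Nat.exists_eq_add_of_le hab
  simp only [smul_eq_mul, mul_add] at key
  have := Nat.le_mul_of_pos_left g hd
  omega

section Prefix

variable {α β : Type*} [Preorder β] {m : ℕ} {f : α → β}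

theorem le_of_mem_map_Iio (e : Fin m ≃ α) (hf : Antitone (f ∘ e)) {i j : Fin m}
    (hij : (i : ℕ) + 1 = j) {x : α} (hx : x ∈ (Iio j).map e.toEmbedding) : f (e i) ≤ f x := by
  rw [mem_map_equiv, mem_Iio] at hx
  have hxi : e.symm x ≤ i := Fin.le_iff_val_le_val.mpr (by have := Fin.lt_def.mp hx; omega)
  simpa using hf hxi

theorem le_of_notMem_map_Iio (e : Fin m ≃ α) (hf : Antitone (f ∘ e)) {j : Fin m} {x : α}
    (hx : x ∉ (Iio j).map e.toEmbedding) : f x ≤ f (e j) := by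
  rw [mem_map_equiv, mem_Iio, not_lt] at hx
  simpa using hf hx

end Prefix

section Approvals

variable {V C : Type*} [Fintype V] [DecidableEq C]

theorem appScore_le_card (A : V → Finset C) (c : C) : appScore A c ≤ Fintype.card V :=
  (card_filter_le _ _).trans_eq card_univ

theorem exists_notMem_of_appScore_lt {A : V → Finset C} {c : C}
    (h : appScore A c < Fintype.card V) : ∃ v, c ∉ A v := by
  by_contra! hall
  rw [appScore, filter_true_of_mem fun v _ => hall v, card_univ] at h
  exact h.false

theorem avScore_eq_add_ite {A A' : V → Finset C} {c : C} {n : ℕ}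
    (h : ∀ x, appScore A' x = appScore A x + if x = c then n else 0) (S : Finset C) :
    avScore A' S = avScore A S + if c ∈ S then n else 0 := by
  simp only [avScore, h, sum_add_distrib, sum_ite_eq']

theorem appScore_update_insert [DecidableEq V] {A : V → Finset C} {v : V} {c : C}
    (hc : c ∉ A v) (x : C) :
    appScore (Function.update A v (insert c (A v))) x = appScore A x + if x = c then 1 else 0 := by
  unfold appScore
  split_ifs with hx
  · subst hx
    rw [← card_insert_of_notMem (by simpa using hc)]
    congr 1; ext w
    by_cases hw : w = v <;> simp [Function.update_apply, hw]
  · congr 1; ext w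
    by_cases hw : w = v <;> simp [Function.update_apply, hw, hx]

variable [DecidableEq V]

theorem AddSeq.avScore_le_and_le_add {n : ℕ} {A A' : V → Finset C} (h : AddSeq n A A')
    (S : Finset C) :
    avScore A S ≤ avScore A' S ∧ avScore A' S ≤ avScore A S + n := by
  induction n generalizing A' with
  | zero => cases h; simp
  | succ n ih =>
    obtain ⟨A'', v, c, hseq, hc, rfl⟩ := h
    rw [avScore_eq_add_ite (appScore_update_insert hc) S]
    have := ih hseq
    split_ifs <;> omega

theorem exists_addSeq_appScore (A : V → Finset C) (c : C) {n : ℕ}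
    (hn : appScore A c + n ≤ Fintype.card V) :
    ∃ A', AddSeq n A A' ∧ ∀ x, appScore A' x = appScore A x + if x = c then n else 0 := by
  induction n with
  | zero => exact ⟨A, rfl, by simp⟩
  | succ n ih =>
    obtain ⟨A'', hseq, hscore⟩ := ih (by omega)
    obtain ⟨v, hv⟩ := exists_notMem_of_appScore_lt (A := A'') (c := c) 
      (by rw [hscore, if_pos rfl]; omega)
    refine ⟨_, ⟨A'', v, c, hseq, hv, rfl⟩, fun x => ?_⟩
    rw [appScore_update_insert hv, hscore]
    split_ifs <;> omega

end Approvals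

section Winners

variable {V C : Type*} [Fintype V] [DecidableEq C]

theorem avWinners_eq_singleton {A : V → Finset C} {k : ℕ} {T : Finset C} (hT : #T = k)
    (h : ∀ S : Finset C, #S = k → S ≠ T → avScore A S < avScore A T) :
    avWinners A k = {T} := by
  ext S
  constructor
  · rintro ⟨hS, hmax⟩
    by_contra hne
    exact (h S hS hne).not_ge (hmax T hT)
  · rintro rfl
    refine ⟨hT, fun U hU => ?_⟩
    rcases eq_or_ne U S with rfl | hne
    · rfl
    · exact (h U hU hne).le

theorem avWinners_eq_singleton_of_separated {A A' : V → Finset C} {k n a b : ℕ} {T : Finset C}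
    (hT : #T = k) (ha : ∀ x ∈ T, a ≤ appScore A x) (hb : ∀ x ∉ T, appScore A x ≤ b)
    (hn : n < a - b) (hA' : ∀ S, avScore A S ≤ avScore A' S ∧ avScore A' S ≤ avScore A S + n) :
    avWinners A' k = {T} := by
  refine avWinners_eq_singleton hT fun S hS hne => ?_
  have hmargin : avScore A S + (a - b) ≤ avScore A T :=
    sum_add_sub_le_sum_of_ne _ (hS.trans hT.symm) hne (by omega) ha hb
  have := hA' S
  have := hA' T
  omega

theorem exists_addSeq_avWinners_ne [DecidableEq V] {A : V → Finset C} {k : ℕ} {T : Finset C}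
    (hT : #T = k) {c c' : C} (hc : c ∈ T) (hc' : c' ∉ T)
    (ha : ∀ x ∈ T, appScore A c ≤ appScore A x) (hb : ∀ x ∉ T, appScore A x ≤ appScore A c')
    (hgap : appScore A c' < appScore A c) :
    ∃ A', AddSeq (appScore A c - appScore A c') A A' ∧ avWinners A' k ≠ avWinners A k := by
  obtain ⟨A', hseq, hscore⟩ := exists_addSeq_appScore A c' (n := appScore A c - appScore A c')
    (by have := appScore_le_card A c; omega)
  have hwin : avWinners A k = {T} :=
    avWinners_eq_singleton_of_separated hT ha hb (n := 0) (by omega) (by simp)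
  have hTwin : T ∈ avWinners A k := hwin ▸ rfl
  have hc'_erase : c' ∉ T.erase c := fun h => hc' (mem_of_mem_erase h)
  have hU : #(insert c' (T.erase c)) = k := by
    rw [card_insert_of_notMem hc'_erase, card_erase_of_mem hc, ← hT]
    exact Nat.sub_add_cancel (card_pos.mpr ⟨c, hc⟩)
  have hUscore : avScore A' (insert c' (T.erase c)) = avScore A T := by
    have hT_sum := add_sum_erase T (appScore A) hc
    have hU_sum := sum_insert (f := appScore A) hc'_erase
    rw [avScore_eq_add_ite hscore, if_pos (mem_insert_self _ _)]
    unfold avScore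
    omega
  have hUwin : insert c' (T.erase c) ∈ avWinners A' k := by
    refine ⟨hU, fun S hS => ?_⟩
    rw [avScore_eq_add_ite hscore, hUscore]
    split_ifs with hc'S
    · exact sum_add_sub_le_sum_of_ne _ (hS.trans hT.symm) (fun h => hc' (h ▸ hc'S)) hgap.le ha hb
    · exact hTwin.2 S hS
  refine ⟨A', hseq, fun h => ?_⟩
  rw [h, hwin] at hUwin
  exact hc' (hUwin ▸ mem_insert_self c' _)

end Winners

/-- With the paper's 1-based indexing, `c_k = e ⟨k - 1, _⟩` and `c_{k+1} = e ⟨k, _⟩`. -/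
theorem av_add_robustness_radius_general
    {V C : Type*} [Fintype V] [DecidableEq V] [DecidableEq C]
    (A : V → Finset C) (m : ℕ) (e : Fin m ≃ C)
    (hsort : ∀ i j : Fin m, i ≤ j → appScore A (e j) ≤ appScore A (e i))
    (k : ℕ) (hk0 : 0 < k) (hkm : k < m)
    (hgap : appScore A (e ⟨k, hkm⟩) <
      appScore A (e ⟨k - 1, lt_of_le_of_lt (Nat.sub_le k 1) hkm⟩)) :
    (∃ A' : V → Finset C,
      AddSeq (appScore A (e ⟨k - 1, lt_of_le_of_lt (Nat.sub_le k 1) hkm⟩) -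
        appScore A (e ⟨k, hkm⟩)) A A' ∧ avWinners A' k ≠ avWinners A k) ∧
    (∀ n : ℕ, n < appScore A (e ⟨k - 1, lt_of_le_of_lt (Nat.sub_le k 1) hkm⟩) -
        appScore A (e ⟨k, hkm⟩) →
      ∀ A' : V → Finset C, AddSeq n A A' → avWinners A' k = avWinners A k) := by
  set i : Fin m := ⟨k - 1, lt_of_le_of_lt (Nat.sub_le k 1) hkm⟩
  set j : Fin m := ⟨k, hkm⟩
  set T := (Iio j).map e.toEmbedding
  have hT : #T = k := by simp [T, j]
  have hanti : Antitone (appScore A ∘ e) := hsort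
  have ha x (hx : x ∈ T) := le_of_mem_map_Iio e hanti (i := i) (Nat.sub_add_cancel hk0) hx
  have hb x (hx : x ∉ T) := le_of_notMem_map_Iio e hanti hx
  have hiT : e i ∈ T := mem_map_of_mem _ (mem_Iio.mpr (Fin.mk_lt_mk.mpr (by omega)))
  have hjT : e j ∉ T := by simp [T]
  refine ⟨exists_addSeq_avWinners_ne hT hiT hjT ha hb hgap, fun n hn A' hA' => ?_⟩
  rw [avWinners_eq_singleton_of_separated hT ha hb hn hA'.avScore_le_and_le_add,
    avWinners_eq_singleton_of_separated hT ha hb (n := 0) (by omega) (by simp)]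

/-- if candidates are sorted by non-increasing approval score via `e`
and `app(c_k) > app(c_{k+1})`, then the minimum number of approval additions needed
to change the set of AV-winning size-`k` committees is exactly
`app(c_k) − app(c_{k+1})`. (With 1-based indexing, `c_k = e ⟨k-1,_⟩`, `c_{k+1} = e ⟨k,_⟩`.) -/
theorem av_add_robustness_radius
    {V C : Type*} [Fintype V] [Fintype C] [DecidableEq V] [DecidableEq C]
    (A : V → Finset C) (m : ℕ) (hm : m = Fintype.card C) (e : Fin m ≃ C)
    (hsort : ∀ i j : Fin m, i ≤ j → appScore A (e j) ≤ appScore A (e i))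
    (k : ℕ) (hk0 : 0 < k) (hkm : k < m)
    (hgap : appScore A (e ⟨k, hkm⟩) <
      appScore A (e ⟨k - 1, lt_of_le_of_lt (Nat.sub_le k 1) hkm⟩)) :
    (∃ A' : V → Finset C,
      AddSeq (appScore A (e ⟨k - 1, lt_of_le_of_lt (Nat.sub_le k 1) hkm⟩) -
        appScore A (e ⟨k, hkm⟩)) A A' ∧ avWinners A' k ≠ avWinners A k) ∧
    (∀ n : ℕ, n < appScore A (e ⟨k - 1, lt_of_le_of_lt (Nat.sub_le k 1) hkm⟩) -
        appScore A (e ⟨k, hkm⟩) →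
      ∀ A' : V → Finset C, AddSeq n A A' → avWinners A' k = avWinners A k) :=
  av_add_robustness_radius_general A m e hsort k hk0 hkm hgap
end
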